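/- The tensor A of order 4 and dimension 2 with a_{1111} = 2, a_{1112} = 1, a_{2122} = 4, a_{2222} = 2 and all other entries zero is a column adequate tensor, but is neither a P-tensor nor a positive semi-definite tensor. -/

import Mathlib

open Finset Matrix

/-- For a tensor `A` of order `k+1` and dimension `n`, `tmul A x i = (A x^k)_i`. -/
def tmul {n k : ℕ} (A : Fin n → (Fin k → Fin n) → ℝ) (x : Fin n → ℝ) (i : Fin n) : ℝ :=
  ∑ f : Fin k → Fin n, A i f * ∏ j, x (f j)

/-- A tensor is column adequate if `x_i (A x^{m-1})_i ≤ 0` for all `i` implies `A x^{m-1} = 0`. -/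
def ColumnAdequate {n k : ℕ} (A : Fin n → (Fin k → Fin n) → ℝ) : Prop :=
  ∀ x : Fin n → ℝ, (∀ i, x i * tmul A x i ≤ 0) → ∀ i, tmul A x i = 0

/-- A tensor is row diagonal if `a_{i i2...im}` can be nonzero only when `i2 = ... = im`. -/
def RowDiagonal {n k : ℕ} (A : Fin n → (Fin k → Fin n) → ℝ) : Prop :=
  ∀ i f, A i f ≠ 0 → ∀ j j' : Fin k, f j = f j'

/-- The majorization matrix of a tensor: `M(A)_{ij} = a_{ijj...j}`. -/
def majorization {n k : ℕ} (A : Fin n → (Fin k → Fin n) → ℝ) : Matrix (Fin n) (Fin n) ℝ :=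
  fun i j => A i (fun _ => j)

/-- A square matrix `M` (over any finite index type) is column adequate if
`z_i (Mz)_i ≤ 0` for all `i` implies `Mz = 0`. -/
def MatrixColumnAdequate {ι : Type*} [Fintype ι] (M : Matrix ι ι ℝ) : Prop :=
  ∀ z : ι → ℝ, (∀ i, z i * M.mulVec z i ≤ 0) → M.mulVec z = 0

/-- The order-4 dimension-2 tensor with `a_{1111} = 2`, `a_{1112} = 1`, `a_{2122} = 4`,
`a_{2222} = 2` and all other entries zero. -/
noncomputable def exTensor17 : Fin 2 → (Fin 3 → Fin 2) → ℝ := fun i f =>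
  if i = 0 ∧ f = ![0, 0, 0] then 2
  else if i = 0 ∧ f = ![0, 0, 1] then 1
  else if i = 1 ∧ f = ![0, 1, 1] then 4
  else if i = 1 ∧ f = ![1, 1, 1] then 2
  else 0

/-! Both rows of `A x³` carry the common factor `s = 2x₁ + x₂`: `x₁ (A x³)₁ = x₁³ s` and
`x₂ (A x³)₂ = 2 x₂³ s`. If both are `≤ 0`, then `x_i s ≤ 0` for each `i`, and summing with the
coefficients `2, 1` of `s` gives `s² ≤ 0`, so `s = 0` and `A x³ = 0`. The same factor shows that
`A x³ = 0` at `x = (1, -2)`, so `A` is not a P-tensor, and `A x⁴ = s (x₁³ + 2 x₂³) < 0` at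
`x = (1, -3/2)`. -/

lemma tmul_eq_sum_of_support {n k : ℕ} {A : Fin n → (Fin k → Fin n) → ℝ} {i : Fin n}
    (s : Finset (Fin k → Fin n)) (hA : ∀ f ∉ s, A i f = 0) (x : Fin n → ℝ) :
    tmul A x i = ∑ f ∈ s, A i f * ∏ j, x (f j) :=
  (sum_subset (subset_univ s) fun f _ hf => by rw [hA f hf, zero_mul]).symm

lemma columnAdequate_of_tmul_eq_mul_sum {n k p : ℕ} {A : Fin n → (Fin k → Fin n) → ℝ}
    (hp : Even p) (c w : Fin n → ℝ) (hc : ∀ i, 0 < c i) (hw : ∀ j, 0 ≤ w j)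
    (hA : ∀ x i, tmul A x i = c i * x i ^ p * ∑ j, w j * x j) : ColumnAdequate A := by
  intro x hx i
  set s := ∑ j, w j * x j with hs
  have hxs : ∀ j, x j * s ≤ 0 := by
    intro j
    rcases eq_or_ne (x j) 0 with h0 | h0
    · rw [h0, zero_mul]
    · have hpos : 0 < c j * x j ^ p := mul_pos (hc j) (hp.pow_pos h0)
      have := hx j
      rw [hA, ← hs, show x j * (c j * x j ^ p * s) = c j * x j ^ p * (x j * s) by ring] at this
      exact nonpos_of_mul_nonpos_right this hpos
  have hsq : s * s ≤ 0 := by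
    calc s * s = ∑ j, w j * (x j * s) := by rw [hs, sum_mul]; simp only [mul_assoc]
      _ ≤ 0 := sum_nonpos fun j _ => mul_nonpos_of_nonneg_of_nonpos (hw j) (hxs j)
  rw [hA, ← hs, mul_self_eq_zero.mp (le_antisymm hsq (mul_self_nonneg s)), mul_zero]

lemma tmul_exTensor17 (x : Fin 2 → ℝ) (i : Fin 2) :
    tmul exTensor17 x i = ![1, 2] i * x i ^ 2 * ∑ j, ![2, 1] j * x j := by
  fin_cases i
  · rw [tmul_eq_sum_of_support {![0, 0, 0], ![0, 0, 1]} (by intro f hf; simp_all [exTensor17]),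
      sum_pair (by decide)]
    norm_num [exTensor17, Fin.prod_univ_three, Fin.sum_univ_two, cons_val_two]
    ring
  · rw [tmul_eq_sum_of_support {![0, 1, 1], ![1, 1, 1]} (by intro f hf; simp_all [exTensor17]),
      sum_pair (by decide)]
    norm_num [exTensor17, Fin.prod_univ_three, Fin.sum_univ_two, cons_val_two]
    ring

/-- This tensor is column adequate, but neither a P-tensor nor positive semi-definite. -/
theorem exTensor17_adequate_not_P_not_PSD :
    ColumnAdequate exTensor17 ∧
    ¬ (∀ x : Fin 2 → ℝ, x ≠ 0 → ∃ i, x i ≠ 0 ∧ 0 < x i * tmul exTensor17 x i) ∧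
    ¬ (∀ x : Fin 2 → ℝ, 0 ≤ ∑ i, x i * tmul exTensor17 x i) := by
  refine ⟨columnAdequate_of_tmul_eq_mul_sum even_two _ _ ?_ ?_ tmul_exTensor17, fun hP => ?_,
    fun hPSD => ?_⟩
  · intro i; fin_cases i <;> norm_num
  · intro j; fin_cases j <;> norm_num
  · obtain ⟨i, -, hi⟩ := hP ![1, -2] (ne_of_apply_ne (· 0) (by norm_num))
    simp [tmul_exTensor17, Fin.sum_univ_two] at hi
  · have := hPSD ![1, -3/2]
    norm_num [tmul_exTensor17, Fin.sum_univ_two] at this
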